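/- arXiv:2106.00729 — 2 statements merged into one kernel-verified Lean document; each statement's English description precedes it below -/
import Mathlib

section
/- Fix r > 0 and θ ∈ ℝ. Let L_{θ,r} = (cos θ, sin θ)·D_x + [[r κ_{θ,1}(x), D_{x_1} − iD_{x_2}],[D_{x_1} + iD_{x_2}, −r κ_{θ,1}(x)]] with κ_{θ,1}(x) = −sin θ·x₁ + cos θ·x₂, let 𝒰_θ f(x) = diag(e^{−iθ/2}, e^{iθ/2}) f(R_θ x) with R_θ the rotation matrix with rows (cos θ, sin θ) and (−sin θ, cos θ), and let S_r f(x) = f(√r x). Then for every f ∈ 𝒮(ℝ²;ℂ²), S_r⁻¹ 𝒰_θ⁻¹ L_{θ,r} 𝒰_θ S_r f = √r · L_{0,1} f, where L_{0,1} = [[D_{x_1} + x₂, D_{x_1} − iD_{x_2}],[D_{x_1} + iD_{x_2}, D_{x_1} − x₂]]. -/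
noncomputable section

open Real MeasureTheory

/-- Points of the plane `ℝ²`. -/
abbrev Pt : Type := ℝ × ℝ

/-- Values in `ℂ²`. -/
abbrev V2 : Type := ℂ × ℂ

/-- `D_{x_1} = -i ∂_{x_1}` acting on complex-valued functions on `ℝ²`. -/
def DX1 (f : Pt → ℂ) (x : Pt) : ℂ := -Complex.I * fderiv ℝ f x (1, 0)

/-- `D_{x_2} = -i ∂_{x_2}` acting on complex-valued functions on `ℝ²`. -/
def DX2 (f : Pt → ℂ) (x : Pt) : ℂ := -Complex.I * fderiv ℝ f x (0, 1)

/-- The semiclassical Dirac operator with domain wall `κ`: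
`(Hψ)₁ = κψ₁ + (εD₁ - iεD₂)ψ₂`, `(Hψ)₂ = (εD₁ + iεD₂)ψ₁ - κψ₂`. -/
def dirac (ε : ℝ) (κ : Pt → ℝ) (ψ : Pt → V2) (x : Pt) : V2 :=
  ((κ x : ℂ) * (ψ x).1
      + (ε : ℂ) * (DX1 (fun z => (ψ z).2) x - Complex.I * DX2 (fun z => (ψ z).2) x),
   (ε : ℂ) * (DX1 (fun z => (ψ z).1) x + Complex.I * DX2 (fun z => (ψ z).1) x)
      - (κ x : ℂ) * (ψ x).2)

/-- The gradient of a real-valued function on `ℝ²`, as a pair of partial derivatives. -/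
def gradR (κ : Pt → ℝ) (x : Pt) : Pt := (fderiv ℝ κ x (1, 0), fderiv ℝ κ x (0, 1))

/-- Counterclockwise `π/2`-rotation of a vector in `ℝ²`. -/
def perp (v : Pt) : Pt := (-v.2, v.1)

/-- `κ ∈ C_b^∞(ℝ²)`: smooth with all derivatives bounded. -/
def CbSmooth (κ : Pt → ℝ) : Prop :=
  ContDiff ℝ (⊤ : ℕ∞) κ ∧ ∀ n : ℕ, ∃ C : ℝ, ∀ x : Pt, ‖iteratedFDeriv ℝ n κ x‖ ≤ C

/-- The evolution equation `(ε D_t + H)Ψ = 0`, where `D_t = -i∂_t`. -/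
def DiracEvol (ε : ℝ) (κ : Pt → ℝ) (Ψ : ℝ → Pt → V2) : Prop :=
  ∀ t x, (ε : ℂ) • ((-Complex.I) • deriv (fun s => Ψ s x) t) + dirac ε κ (Ψ t) x = 0

/-- The spinor `(e^{-iθ/2}, -e^{iθ/2})`. -/
def spinor (θ : ℝ) : V2 :=
  (Complex.exp (-(Complex.I * (θ : ℂ)) / 2), -Complex.exp (Complex.I * (θ : ℂ) / 2))

/-- The rotation matrix `R_θ` with rows `(cos θ, sin θ)` and `(-sin θ, cos θ)`,
    acting on `ℝ²`. -/
def rotM (θ : ℝ) (x : Pt) : Pt :=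
  (Real.cos θ * x.1 + Real.sin θ * x.2, -Real.sin θ * x.1 + Real.cos θ * x.2)

/-- The transport operator `L_{θ,r}` with linear domain wall. -/
def Lop (θ r : ℝ) (u : Pt → V2) (x : Pt) : V2 :=
  ((Real.cos θ : ℂ) * DX1 (fun z => (u z).1) x + (Real.sin θ : ℂ) * DX2 (fun z => (u z).1) x
      + ((r * (-Real.sin θ * x.1 + Real.cos θ * x.2) : ℝ) : ℂ) * (u x).1
      + (DX1 (fun z => (u z).2) x - Complex.I * DX2 (fun z => (u z).2) x),
   (Real.cos θ : ℂ) * DX1 (fun z => (u z).2) x + (Real.sin θ : ℂ) * DX2 (fun z => (u z).2) x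
      + (DX1 (fun z => (u z).1) x + Complex.I * DX2 (fun z => (u z).1) x)
      - ((r * (-Real.sin θ * x.1 + Real.cos θ * x.2) : ℝ) : ℂ) * (u x).2)

/-- The operator `L_{0,1} = [[D₁ + x₂, D₁ - iD₂],[D₁ + iD₂, D₁ - x₂]]`. -/
def L01op (u : Pt → V2) (x : Pt) : V2 :=
  (DX1 (fun z => (u z).1) x + (x.2 : ℂ) * (u x).1
      + (DX1 (fun z => (u z).2) x - Complex.I * DX2 (fun z => (u z).2) x),
   (DX1 (fun z => (u z).1) x + Complex.I * DX2 (fun z => (u z).1) x)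
      + DX1 (fun z => (u z).2) x - (x.2 : ℂ) * (u x).2)

/-- The unitary matrix `U_θ = diag(e^{-iθ/2}, e^{iθ/2})` acting on `ℂ²`. -/
def Umul (θ : ℝ) (v : V2) : V2 :=
  (Complex.exp (-(Complex.I * (θ : ℂ)) / 2) * v.1, Complex.exp (Complex.I * (θ : ℂ) / 2) * v.2)

/-- The operator `𝒰_θ f (x) = U_θ f(R_θ x)`; its inverse is `𝒰_{-θ}`. -/
def Uop (θ : ℝ) (g : Pt → V2) (x : Pt) : V2 := Umul θ (g (rotM θ x))

/-- The dilation operator: `scaleOp c g (x) = g(c x)`; `S_r = scaleOp √r` and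
`S_r⁻¹ = scaleOp (1/√r)`. -/
def scaleOp (c : ℝ) (g : Pt → V2) (x : Pt) : V2 := g (c * x.1, c * x.2)


def mkL (a b c d : ℝ) : Pt →L[ℝ] Pt :=
  (a • (ContinuousLinearMap.fst ℝ ℝ ℝ) + b • (ContinuousLinearMap.snd ℝ ℝ ℝ)).prod
    (c • (ContinuousLinearMap.fst ℝ ℝ ℝ) + d • (ContinuousLinearMap.snd ℝ ℝ ℝ))

lemma mkL_apply (a b c d : ℝ) (z : Pt) : mkL a b c d z = (a * z.1 + b * z.2, c * z.1 + d * z.2) := by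
  simp [mkL, smul_eq_mul]

lemma fderiv_mul_comp {F : Pt → ℂ} (hF : Differentiable ℝ F) (c : ℂ) (L : Pt →L[ℝ] Pt) (p v : Pt) :
    fderiv ℝ (fun z => c * F (L z)) p v = c * fderiv ℝ F (L p) (L v) := by
  have h1 : HasFDerivAt (fun z => F (L z)) ((fderiv ℝ F (L p)).comp L) p :=
    (hF (L p)).hasFDerivAt.comp p L.hasFDerivAt
  have h2 := h1.const_mul c
  rw [h2.fderiv]; simp

lemma clm_pair (D : Pt →L[ℝ] ℂ) (a b : ℝ) : D (a, b) = (a : ℂ) * D (1, 0) + (b : ℂ) * D (0, 1) := by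
  have h : (a, b) = a • ((1:ℝ), (0:ℝ)) + b • ((0:ℝ), (1:ℝ)) := by
    simp [Prod.ext_iff]
  rw [h, map_add, D.map_smul, D.map_smul, Complex.real_smul, Complex.real_smul]

/-- equation (3.23) of the paper:
`S_r⁻¹ 𝒰_θ⁻¹ L_{θ,r} 𝒰_θ S_r = √r · L_{0,1}`. -/
theorem statement10 (r θ : ℝ) (hr : 0 < r) (f : SchwartzMap Pt V2) :
    ∀ x : Pt,
      scaleOp (1 / Real.sqrt r)
          (Uop (-θ) (fun z => Lop θ r (Uop θ (scaleOp (Real.sqrt r) (⇑f))) z)) x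
        = ((Real.sqrt r : ℝ) : ℂ) • L01op (⇑f) x := by

  intro x
  have hs0 : 0 < Real.sqrt r := Real.sqrt_pos.2 hr
  set s : ℝ := Real.sqrt r with hsdef
  have hss : s * s = r := Real.mul_self_sqrt hr.le
  have hsne : s ≠ 0 := ne_of_gt hs0
  have hF1 : Differentiable ℝ (fun w : Pt => (f w).1) := f.differentiable.fst
  have hF2 : Differentiable ℝ (fun w : Pt => (f w).2) := f.differentiable.snd
  set L : Pt →L[ℝ] Pt := mkL (s * Real.cos θ) (s * Real.sin θ) (-(s * Real.sin θ)) (s * Real.cos θ) with hLdef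
  set c1 : ℂ := Complex.exp (-(Complex.I * (θ:ℂ)) / 2) with hc1
  set c2 : ℂ := Complex.exp (Complex.I * (θ:ℂ) / 2) with hc2
  have hps : (Real.cos θ:ℂ)^2 + (Real.sin θ:ℂ)^2 = 1 := by
    exact_mod_cast congrArg (Complex.ofReal) (Real.cos_sq_add_sin_sq θ)
  have h12 : c1 * c2 = 1 := by
    rw [hc1, hc2, ← Complex.exp_add,
      show -(Complex.I * (θ:ℂ))/2 + Complex.I * (θ:ℂ)/2 = 0 by ring, Complex.exp_zero]
  have h22 : c2 * c2 = (Real.cos θ:ℂ) + (Real.sin θ:ℂ) * Complex.I := by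
    rw [hc2, ← Complex.exp_add, show Complex.I * (θ:ℂ)/2 + Complex.I * (θ:ℂ)/2 = (θ:ℂ) * Complex.I by ring,
      Complex.exp_mul_I, ← Complex.ofReal_cos, ← Complex.ofReal_sin]
  have h11 : c1 * c1 = (Real.cos θ:ℂ) - (Real.sin θ:ℂ) * Complex.I := by
    rw [hc1, ← Complex.exp_add,
      show -(Complex.I * (θ:ℂ))/2 + -(Complex.I * (θ:ℂ))/2 = (-(θ:ℂ)) * Complex.I by ring,
      Complex.exp_mul_I, Complex.cos_neg, Complex.sin_neg, ← Complex.ofReal_cos, ← Complex.ofReal_sin]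
    ring
  set p : Pt := rotM (-θ) (1/s * x.1, 1/s * x.2) with hp
  have hLz : ∀ z : Pt, (s * (Real.cos θ * z.1 + Real.sin θ * z.2),
      s * (-Real.sin θ * z.1 + Real.cos θ * z.2)) = L z := by
    intro z
    rw [hLdef, mkL_apply, Prod.ext_iff]
    constructor <;> · simp; ring
  have hLp : L p = x := by
    rw [hLdef, mkL_apply, hp]
    simp only [rotM, Real.cos_neg, Real.sin_neg]
    have h1 : Real.cos θ ^ 2 + Real.sin θ ^ 2 = 1 := Real.cos_sq_add_sin_sq θ
    rw [Prod.ext_iff]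
    refine ⟨?_, ?_⟩
    · field_simp
      linear_combination x.1 * h1
    · field_simp
      linear_combination x.2 * h1
  have hκ : r * (-Real.sin θ * p.1 + Real.cos θ * p.2) = s * x.2 := by
    rw [hp]
    simp only [rotM, Real.cos_neg, Real.sin_neg, ← hss]
    have h1 : Real.cos θ ^ 2 + Real.sin θ ^ 2 = 1 := Real.cos_sq_add_sin_sq θ
    field_simp
    linear_combination x.2 * h1
  have hg1 : (fun z => (Uop θ (scaleOp s ⇑f) z).1) = fun z => c1 * (f (L z)).1 := by
    funext z
    rw [← hLz z]
    rfl
  have hg2 : (fun z => (Uop θ (scaleOp s ⇑f) z).2) = fun z => c2 * (f (L z)).2 := by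
    funext z
    rw [← hLz z]
    rfl
  have hval : Uop θ (scaleOp s ⇑f) p = (c1 * (f x).1, c2 * (f x).2) := by
    have h1 := congrFun hg1 p
    have h2 := congrFun hg2 p
    rw [hLp] at h1 h2
    exact Prod.ext h1 h2
  have hLe1 : L (1, 0) = (s * Real.cos θ, -(s * Real.sin θ)) := by
    rw [hLdef, mkL_apply]; norm_num
  have hLe2 : L (0, 1) = (s * Real.sin θ, s * Real.cos θ) := by
    rw [hLdef, mkL_apply]; norm_num
  set A1 : ℂ := fderiv ℝ (fun w : Pt => (f w).1) x (1, 0) with hA1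
  set A2 : ℂ := fderiv ℝ (fun w : Pt => (f w).1) x (0, 1) with hA2
  set B1 : ℂ := fderiv ℝ (fun w : Pt => (f w).2) x (1, 0) with hB1
  set B2 : ℂ := fderiv ℝ (fun w : Pt => (f w).2) x (0, 1) with hB2
  have hd11 : DX1 (fun z => (Uop θ (scaleOp s ⇑f) z).1) p
      = -Complex.I * (c1 * ((s * Real.cos θ : ℝ) * A1 + ((-(s * Real.sin θ) : ℝ) : ℂ) * A2)) := by
    rw [DX1, hg1, fderiv_mul_comp hF1 c1 L p (1, 0), hLp, hLe1, clm_pair, hA1, hA2]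
  have hd21 : DX2 (fun z => (Uop θ (scaleOp s ⇑f) z).1) p
      = -Complex.I * (c1 * ((s * Real.sin θ : ℝ) * A1 + ((s * Real.cos θ : ℝ) : ℂ) * A2)) := by
    rw [DX2, hg1, fderiv_mul_comp hF1 c1 L p (0, 1), hLp, hLe2, clm_pair, hA1, hA2]
  have hd12 : DX1 (fun z => (Uop θ (scaleOp s ⇑f) z).2) p
      = -Complex.I * (c2 * ((s * Real.cos θ : ℝ) * B1 + ((-(s * Real.sin θ) : ℝ) : ℂ) * B2)) := by
    rw [DX1, hg2, fderiv_mul_comp hF2 c2 L p (1, 0), hLp, hLe1, clm_pair, hB1, hB2]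
  have hd22 : DX2 (fun z => (Uop θ (scaleOp s ⇑f) z).2) p
      = -Complex.I * (c2 * ((s * Real.sin θ : ℝ) * B1 + ((s * Real.cos θ : ℝ) : ℂ) * B2)) := by
    rw [DX2, hg2, fderiv_mul_comp hF2 c2 L p (0, 1), hLp, hLe2, clm_pair, hB1, hB2]
  show Umul (-θ) (Lop θ r (Uop θ (scaleOp s ⇑f)) p) = _
  rw [Lop]
  rw [hd11, hd21, hd12, hd22, hval, hκ]
  have hm1 : Complex.exp (-(Complex.I * -(θ:ℂ)) / 2) = c2 := by
    rw [hc2]; congr 1; ring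
  have hm2 : Complex.exp (Complex.I * -(θ:ℂ) / 2) = c1 := by
    rw [hc1]; congr 1; ring
  have hI : Complex.I ^ 2 = -1 := Complex.I_sq
  simp only [Umul, L01op, DX1, DX2, Prod.smul_mk, smul_eq_mul, Complex.ofReal_mul,
    Complex.ofReal_neg, hm1, hm2, ← hA1, ← hA2, ← hB1, ← hB2]
  rw [Prod.ext_iff]
  constructor
  · linear_combination
      ((s:ℂ)*(x.2:ℂ)*(f x).1 - Complex.I*((Real.sin θ:ℂ))^2*(s:ℂ)*A1
        - Complex.I*((Real.cos θ:ℂ))^2*(s:ℂ)*A1) * h12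
      + (Complex.I*(Real.sin θ:ℂ)*(s:ℂ)*B2 - Complex.I*(Real.cos θ:ℂ)*(s:ℂ)*B1
        + Complex.I^2*(Real.sin θ:ℂ)*(s:ℂ)*B1 + Complex.I^2*(Real.cos θ:ℂ)*(s:ℂ)*B2) * h22
      + (-(s:ℂ)*B2 + ((Real.sin θ:ℂ))^2*(s:ℂ)*B2 + ((Real.cos θ:ℂ))^2*(s:ℂ)*B2
        + Complex.I*((Real.sin θ:ℂ))^2*(s:ℂ)*B1
        + Complex.I*(Real.cos θ:ℂ)*(Real.sin θ:ℂ)*(s:ℂ)*B2) * hI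
      + (-(s:ℂ)*B2 - Complex.I*(s:ℂ)*B1 - Complex.I*(s:ℂ)*A1) * hps
  · linear_combination
      (-(s:ℂ)*(x.2:ℂ)*(f x).2 - Complex.I*((Real.sin θ:ℂ))^2*(s:ℂ)*B1
        - Complex.I*((Real.cos θ:ℂ))^2*(s:ℂ)*B1) * h12
      + (Complex.I*(Real.sin θ:ℂ)*(s:ℂ)*A2 - Complex.I*(Real.cos θ:ℂ)*(s:ℂ)*A1
        - Complex.I^2*(Real.sin θ:ℂ)*(s:ℂ)*A1 - Complex.I^2*(Real.cos θ:ℂ)*(s:ℂ)*A2) * h11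
      + ((s:ℂ)*A2 - ((Real.sin θ:ℂ))^2*(s:ℂ)*A2 - ((Real.cos θ:ℂ))^2*(s:ℂ)*A2
        + Complex.I*((Real.sin θ:ℂ))^2*(s:ℂ)*A1
        + Complex.I*(Real.cos θ:ℂ)*(Real.sin θ:ℂ)*(s:ℂ)*A2) * hI
      + ((s:ℂ)*A2 - Complex.I*(s:ℂ)*B1 - Complex.I*(s:ℂ)*A1) * hps
end
end

section
/- Let 𝔞 = x₂ + ∂_{x_2} and 𝔞* = x₂ − ∂_{x_2}, and let φ_n be the Hermite functions: φ_0(x₂) = π^{−1/4} e^{−x₂²/2} and φ_n = (𝔞*)ⁿ φ_0/(2^{n/2} √(n!)). Let L̃_{0,1} = [[0, 𝔞*],[𝔞, 2D_{x_1}]] acting on 𝒮(ℝ²;ℂ²), and define for u ∈ 𝒮(ℝ²;ℂ²), n ∈ ℕ, ξ ∈ ℝ: (Su)(ξ,n) = ∫_{ℝ²} e^{−iξx₁} (u₁(x) φ_{n+1}(x₂), u₂(x) φ_n(x₂))ᵀ dx. Then for every u ∈ 𝒮(ℝ²;ℂ²), n ∈ ℕ, and ξ ∈ ℝ: (S L̃_{0,1}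 u)(ξ,n) = [[0, √(2n+2)],[√(2n+2), 2ξ]] (Su)(ξ,n). -/
noncomputable section

open Real MeasureTheory

/-- The creation operator `𝔞* f = x f - f'` on functions of one real variable. -/
def crea (f : ℝ → ℝ) : ℝ → ℝ := fun s => s * f s - deriv f s

/-- The Hermite functions: `φ₀ = π^{-1/4} e^{-s²/2}` and
`φ_n = (𝔞*)ⁿ φ₀ / (2^{n/2} √(n!))`. -/
def hermF (n : ℕ) : ℝ → ℝ := fun s =>
  (crea^[n] (fun u => Real.pi ^ (-(1 : ℝ) / 4) * Real.exp (-u ^ 2 / 2))) s /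
    ((2 : ℝ) ^ ((n : ℝ) / 2) * Real.sqrt (Nat.factorial n))

/-- The annihilation operator `𝔞 = x₂ + ∂_{x₂}` acting in the second variable. -/
def annOp (g : Pt → ℂ) (x : Pt) : ℂ := (x.2 : ℂ) * g x + fderiv ℝ g x (0, 1)

/-- The creation operator `𝔞* = x₂ - ∂_{x₂}` acting in the second variable. -/
def creOp (g : Pt → ℂ) (x : Pt) : ℂ := (x.2 : ℂ) * g x - fderiv ℝ g x (0, 1)

/-- The conjugated operator `L̃_{0,1} = [[0, 𝔞*],[𝔞, 2D_{x₁}]]`. -/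
def Ltil (u : Pt → V2) (x : Pt) : V2 :=
  (creOp (fun z => (u z).2) x,
   annOp (fun z => (u z).1) x + 2 * DX1 (fun z => (u z).2) x)

/-- The transform `S`:
`(Su)(ξ,n) = ∫ e^{-iξx₁} (u₁(x)φ_{n+1}(x₂), u₂(x)φ_n(x₂))ᵀ dx`. -/
def Sop (u : Pt → V2) (ξ : ℝ) (n : ℕ) : V2 :=
  (∫ x : Pt, Complex.exp (-Complex.I * (ξ : ℂ) * (x.1 : ℂ)) * (u x).1 * ((hermF (n + 1) x.2 : ℝ) : ℂ),
   ∫ x : Pt, Complex.exp (-Complex.I * (ξ : ℂ) * (x.1 : ℂ)) * (u x).2 * ((hermF n x.2 : ℝ) : ℂ))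

open Polynomial

def gaussF : ℝ → ℝ := fun s => Real.exp (-s ^ 2 / 2)

lemma hasDerivAt_gaussF (s : ℝ) : HasDerivAt gaussF (-s * gaussF s) s := by
  have h : HasDerivAt (fun u : ℝ => -u ^ 2 / 2) (-s) s := by
    have := ((hasDerivAt_pow 2 s).neg).div_const 2
    simpa using this.congr_deriv (by ring)
  unfold gaussF; simpa [mul_comm] using h.exp

lemma pg_hasDerivAt (P : Polynomial ℝ) (s : ℝ) :
    HasDerivAt (fun t => P.eval t * gaussF t)
      ((P.derivative - X * P).eval s * gaussF s) s := by
  have := (P.hasDerivAt s).mul (hasDerivAt_gaussF s)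
  refine this.congr_deriv ?_
  simp [Polynomial.eval_mul]
  ring

lemma pg_deriv (P : Polynomial ℝ) (s : ℝ) :
    deriv (fun t => P.eval t * gaussF t) s = (P.derivative - X * P).eval s * gaussF s :=
  (pg_hasDerivAt P s).deriv

lemma pg_crea (P : Polynomial ℝ) (s : ℝ) :
    crea (fun t => P.eval t * gaussF t) s = (2 • (X * P) - P.derivative).eval s * gaussF s := by
  simp [crea, pg_deriv]
  ring

/-- annihilation: `s f + f'` acts as `d/dX` on the polynomial part. -/
lemma pg_ann (P : Polynomial ℝ) (s : ℝ) :
    s * (P.eval s * gaussF s) + deriv (fun t => P.eval t * gaussF t) s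
      = P.derivative.eval s * gaussF s := by
  simp [pg_deriv]
  ring

/-- Polynomial parts of the unnormalized Hermite functions. -/
def HQ : ℕ → Polynomial ℝ
  | 0 => Polynomial.C (Real.pi ^ (-(1 : ℝ) / 4))
  | n + 1 => 2 • (X * HQ n) - (HQ n).derivative

lemma HQ_deriv : ∀ n : ℕ, (HQ (n + 1)).derivative = (2 * (n + 1)) • HQ n := by
  intro n
  induction n with
  | zero =>
      show (2 • (X * HQ 0) - (HQ 0).derivative).derivative = _
      rw [derivative_sub, derivative_smul, derivative_mul, derivative_X]
      simp only [nsmul_eq_mul, HQ]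
      push_cast
      simp
  | succ m ih =>
      show (2 • (X * HQ (m + 1)) - (HQ (m + 1)).derivative).derivative = _
      rw [derivative_sub, derivative_smul, derivative_mul, derivative_X, ih,
        derivative_smul,
        show (HQ (m + 1) : Polynomial ℝ) = 2 • (X * HQ m) - (HQ m).derivative from rfl]
      simp only [nsmul_eq_mul]
      push_cast
      ring

lemma psi_eq : ∀ (n : ℕ) (s : ℝ),
    crea^[n] (fun u => Real.pi ^ (-(1 : ℝ) / 4) * Real.exp (-u ^ 2 / 2)) s
      = (HQ n).eval s * gaussF s := by
  intro n
  induction n with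
  | zero => intro s; simp [HQ, gaussF]
  | succ m ih =>
      intro s
      rw [Function.iterate_succ_apply']
      have : crea^[m] (fun u => Real.pi ^ (-(1 : ℝ) / 4) * Real.exp (-u ^ 2 / 2))
          = fun t => (HQ m).eval t * gaussF t := funext ih
      rw [this, pg_crea]
      rfl

/-- Normalization constants. -/
def hermC (n : ℕ) : ℝ := (2 : ℝ) ^ ((n : ℝ) / 2) * Real.sqrt (Nat.factorial n)

lemma hermC_pos (n : ℕ) : 0 < hermC n := by
  apply mul_pos (Real.rpow_pos_of_pos two_pos _)
  exact Real.sqrt_pos.2 (by exact_mod_cast Nat.factorial_pos n)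

lemma sqrt2n2_pos (n : ℕ) : 0 < Real.sqrt (2 * n + 2) := by
  apply Real.sqrt_pos.2; positivity

lemma hermC_succ (n : ℕ) : hermC (n + 1) = hermC n * Real.sqrt (2 * n + 2) := by
  unfold hermC
  rw [Nat.factorial_succ]
  push_cast
  rw [show ((n : ℝ) + 1) / 2 = (n : ℝ) / 2 + 1 / 2 by ring, Real.rpow_add two_pos,
    show ((n : ℝ) + 1) * (Nat.factorial n : ℝ) = ((n : ℝ) + 1) * (Nat.factorial n : ℝ) from rfl,
    Real.sqrt_mul (by positivity), ← Real.sqrt_eq_rpow,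
    show (2 : ℝ) * n + 2 = 2 * ((n : ℝ) + 1) by ring, Real.sqrt_mul (by norm_num)]
  ring

/-- `hermF` as a normalized polynomial times Gaussian. -/
lemma hermF_eq (n : ℕ) (s : ℝ) :
    hermF n s = ((hermC n)⁻¹ • HQ n).eval s * gaussF s := by
  rw [hermF, psi_eq]
  simp [hermC, div_eq_mul_inv]
  ring

/-- The creation recurrence `𝔞* φ_n = √(2n+2) φ_{n+1}`. -/
lemma crea_hermF (n : ℕ) (s : ℝ) :
    crea (hermF n) s = Real.sqrt (2 * n + 2) * hermF (n + 1) s := by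
  have h1 : hermF n = fun t => ((hermC n)⁻¹ • HQ n).eval t * gaussF t := funext (hermF_eq n)
  rw [h1, pg_crea, hermF_eq]
  have h2 : (2 • (X * (hermC n)⁻¹ • HQ n) - ((hermC n)⁻¹ • HQ n).derivative)
      = (hermC n)⁻¹ • HQ (n + 1) := by
    rw [show (HQ (n+1) : Polynomial ℝ) = 2 • (X * HQ n) - (HQ n).derivative from rfl]
    rw [derivative_smul, smul_sub]
    congr 1
    rw [smul_comm, mul_smul_comm]
  rw [h2]
  rw [hermC_succ]
  have hs := (sqrt2n2_pos n).ne'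
  have hc := (hermC_pos n).ne'
  simp only [Polynomial.eval_smul, smul_eq_mul, mul_inv]
  field_simp

/-- The annihilation recurrence `𝔞 φ_{n+1} = √(2n+2) φ_n`. -/
lemma ann_hermF (n : ℕ) (s : ℝ) :
    s * hermF (n + 1) s + deriv (hermF (n + 1)) s = Real.sqrt (2 * n + 2) * hermF n s := by
  have h1 : hermF (n+1) = fun t => ((hermC (n+1))⁻¹ • HQ (n+1)).eval t * gaussF t :=
    funext (hermF_eq (n+1))
  rw [h1]
  rw [show (s * (((hermC (n+1))⁻¹ • HQ (n+1)).eval s * gaussF s)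
      + deriv (fun t => ((hermC (n+1))⁻¹ • HQ (n+1)).eval t * gaussF t) s)
      = ((hermC (n+1))⁻¹ • HQ (n+1)).derivative.eval s * gaussF s from pg_ann _ s]
  rw [derivative_smul, HQ_deriv, hermF_eq, hermC_succ]
  have hs := (sqrt2n2_pos n).ne'
  have hc := (hermC_pos n).ne'
  have key : Real.sqrt (2 * n + 2) ^ 2 = 2 * n + 2 :=
    Real.sq_sqrt (by positivity)
  simp only [Polynomial.eval_smul, smul_eq_mul, mul_inv, nsmul_eq_mul, Polynomial.eval_mul,
    Polynomial.eval_natCast]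
  field_simp
  push_cast
  have key' : Real.sqrt (2 * ((n:ℝ) + 1)) ^ 2 = 2 * ((n:ℝ) + 1) := Real.sq_sqrt (by positivity)
  linear_combination (-(Polynomial.eval s (HQ n) * gaussF s)) * key'

lemma pow_le_factorial_mul_exp {t : ℝ} (ht : 0 ≤ t) (i : ℕ) :
    t ^ i ≤ i.factorial * Real.exp t := by
  have h1 : t ^ i / i.factorial ≤ Real.exp t := by
    refine le_trans ?_ (Real.sum_le_exp_of_nonneg ht (i + 1))
    exact Finset.single_le_sum (f := fun j => t ^ j / j.factorial)
      (fun j _ => by positivity) (Finset.self_mem_range_succ i)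
  have hf : (0 : ℝ) < i.factorial := by exact_mod_cast Nat.factorial_pos i
  calc t ^ i = (t ^ i / i.factorial) * i.factorial := by field_simp
    _ ≤ Real.exp t * i.factorial := by
        apply mul_le_mul_of_nonneg_right h1 hf.le
    _ = i.factorial * Real.exp t := by ring

lemma pow_mul_exp_quarter_bound (i : ℕ) (s : ℝ) :
    |s| ^ i * Real.exp (-s ^ 2 / 4) ≤ 1 + 4 ^ i * i.factorial := by
  have hfac : (0:ℝ) < 4 ^ i * i.factorial := by positivity
  have hexp : Real.exp (-s ^ 2 / 4) ≤ 1 := by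
    rw [← Real.exp_zero]; apply Real.exp_le_exp.2; nlinarith [sq_nonneg s]
  rcases le_or_gt |s| 1 with h | h
  · have h1 : |s| ^ i ≤ 1 := pow_le_one₀ (abs_nonneg s) h
    have h2 : |s| ^ i * Real.exp (-s ^ 2 / 4) ≤ 1 * 1 :=
      mul_le_mul h1 hexp (Real.exp_pos _).le zero_le_one
    linarith
  · have h1 : |s| ^ i ≤ (s ^ 2) ^ i := by
      have : |s| ^ i ≤ |s| ^ (2 * i) := pow_le_pow_right₀ h.le (by omega)
      calc |s| ^ i ≤ |s| ^ (2 * i) := this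
        _ = (|s| ^ 2) ^ i := by rw [pow_mul]
        _ = (s ^ 2) ^ i := by rw [sq_abs]
    have h2 : (s ^ 2) ^ i ≤ 4 ^ i * i.factorial * Real.exp (s ^ 2 / 4) := by
      have := pow_le_factorial_mul_exp (t := s ^ 2 / 4) (by positivity) i
      calc (s ^ 2) ^ i = 4 ^ i * (s ^ 2 / 4) ^ i := by
            rw [← mul_pow]; congr 1; ring
        _ ≤ 4 ^ i * (i.factorial * Real.exp (s ^ 2 / 4)) := by
            apply mul_le_mul_of_nonneg_left this (by positivity)
        _ = 4 ^ i * i.factorial * Real.exp (s ^ 2 / 4) := by ring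
    have h3 : |s| ^ i * Real.exp (-s ^ 2 / 4)
        ≤ (4 ^ i * i.factorial * Real.exp (s ^ 2 / 4)) * Real.exp (-s ^ 2 / 4) :=
      mul_le_mul_of_nonneg_right (h1.trans h2) (Real.exp_pos _).le
    have h4 : Real.exp (s ^ 2 / 4) * Real.exp (-s ^ 2 / 4) = 1 := by
      rw [← Real.exp_add]; ring_nf; exact Real.exp_zero
    nlinarith [h3, h4]

/-- Master decay bound: any polynomial times Gaussian is dominated by `C·exp(-s²/4)`. -/
lemma pg_bound (P : Polynomial ℝ) :
    ∃ C : ℝ, ∀ s : ℝ, |P.eval s * gaussF s| ≤ C * Real.exp (-s ^ 2 / 4) := by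
  refine ⟨∑ i ∈ Finset.range (P.natDegree + 1), |P.coeff i| * (1 + 4 ^ i * i.factorial), ?_⟩
  intro s
  have hg : gaussF s = Real.exp (-s ^ 2 / 4) * Real.exp (-s ^ 2 / 4) := by
    rw [gaussF, ← Real.exp_add]; ring_nf
  have h1 : |P.eval s| ≤ ∑ i ∈ Finset.range (P.natDegree + 1), |P.coeff i| * |s| ^ i := by
    rw [Polynomial.eval_eq_sum_range]
    refine (Finset.abs_sum_le_sum_abs _ _).trans ?_
    apply Finset.sum_le_sum
    intro i _
    rw [abs_mul, abs_pow]
  have h2 : |P.eval s * gaussF s|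
      = |P.eval s| * Real.exp (-s ^ 2 / 4) * Real.exp (-s ^ 2 / 4) := by
    rw [abs_mul, hg, show |Real.exp (-s^2/4) * Real.exp (-s^2/4)|
      = Real.exp (-s^2/4) * Real.exp (-s^2/4) from abs_of_pos (by positivity), mul_assoc]
  rw [h2]
  apply mul_le_mul_of_nonneg_right _ (Real.exp_pos _).le
  calc |P.eval s| * Real.exp (-s ^ 2 / 4)
      ≤ (∑ i ∈ Finset.range (P.natDegree + 1), |P.coeff i| * |s| ^ i)
          * Real.exp (-s ^ 2 / 4) :=
        mul_le_mul_of_nonneg_right h1 (Real.exp_pos _).le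
    _ = ∑ i ∈ Finset.range (P.natDegree + 1),
          |P.coeff i| * (|s| ^ i * Real.exp (-s ^ 2 / 4)) := by
        rw [Finset.sum_mul]; apply Finset.sum_congr rfl; intros; ring
    _ ≤ ∑ i ∈ Finset.range (P.natDegree + 1), |P.coeff i| * (1 + 4 ^ i * i.factorial) := by
        apply Finset.sum_le_sum
        intro i _
        exact mul_le_mul_of_nonneg_left (pow_mul_exp_quarter_bound i s) (abs_nonneg _)

lemma pg_bounded (P : Polynomial ℝ) : ∃ C : ℝ, ∀ s : ℝ, |P.eval s * gaussF s| ≤ C := by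
  obtain ⟨C, hC⟩ := pg_bound P
  have hC0 : 0 ≤ C := by
    have := (abs_nonneg _).trans (hC 0)
    nlinarith [Real.exp_pos (-(0:ℝ) ^ 2 / 4)]
  exact ⟨C, fun s => (hC s).trans (by
    nlinarith [Real.exp_pos (-s ^ 2 / 4),
      (Real.exp_le_one_iff).2 (by nlinarith [sq_nonneg s] : -s ^ 2 / 4 ≤ 0)])⟩

lemma pg_integrable (P : Polynomial ℝ) :
    Integrable (fun s => P.eval s * gaussF s) := by
  obtain ⟨C, hC⟩ := pg_bound P
  refine Integrable.mono' (g := fun s => C * Real.exp (-(1/4 : ℝ) * s ^ 2)) ?_ ?_ ?_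
  · exact (integrable_exp_neg_mul_sq (by norm_num)).const_mul C
  · exact ((P.continuous).mul
      (Real.continuous_exp.comp (by continuity))).aestronglyMeasurable
  · refine Filter.Eventually.of_forall fun s => ?_
    have h := hC s
    show |Polynomial.eval s P * gaussF s| ≤ C * Real.exp (-(1/4 : ℝ) * s ^ 2)
    rw [show -(1/4 : ℝ) * s ^ 2 = -s ^ 2 / 4 by ring]
    exact h

/-! ## Part 2: Schwartz components and integration by parts -/


/-- Postcomposition of a Schwartz map with a continuous linear map. -/
def projSchwartz (L : V2 →L[ℝ] ℂ) (u : SchwartzMap Pt V2) : SchwartzMap Pt ℂ where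
  toFun := fun z => L (u z)
  smooth' := L.contDiff.comp (u.smooth ⊤)
  decay' := by
    intro k m
    obtain ⟨C, hC⟩ := u.decay' k m
    refine ⟨‖L‖ * C, fun x => ?_⟩
    have h1 : iteratedFDeriv ℝ m (⇑L ∘ ⇑u) x
        = L.compContinuousMultilinearMap (iteratedFDeriv ℝ m (⇑u) x) :=
      L.iteratedFDeriv_comp_left (u.smooth ⊤).contDiffAt (by exact_mod_cast le_top)
    have h2 : ‖iteratedFDeriv ℝ m (fun z => L (u z)) x‖ ≤ ‖L‖ * ‖iteratedFDeriv ℝ m (⇑u) x‖ := by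
      rw [show (fun z => L (u z)) = ⇑L ∘ ⇑u from rfl, h1]
      exact L.norm_compContinuousMultilinearMap_le _
    calc ‖x‖ ^ k * ‖iteratedFDeriv ℝ m (fun z => L (u z)) x‖
        ≤ ‖x‖ ^ k * (‖L‖ * ‖iteratedFDeriv ℝ m (⇑u) x‖) :=
          mul_le_mul_of_nonneg_left h2 (by positivity)
      _ = ‖L‖ * (‖x‖ ^ k * ‖iteratedFDeriv ℝ m (⇑u) x‖) := by ring
      _ ≤ ‖L‖ * C := mul_le_mul_of_nonneg_left (hC x) (norm_nonneg L)

@[simp] lemma projSchwartz_apply (L : V2 →L[ℝ] ℂ) (u : SchwartzMap Pt V2) (x : Pt) :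
    projSchwartz L u x = L (u x) := rfl

/-- Global sup bound for a Schwartz function. -/
lemma schwartz_bounded (w : SchwartzMap Pt ℂ) : ∃ C : ℝ, ∀ x : Pt, ‖w x‖ ≤ C :=
  ⟨SchwartzMap.seminorm ℝ 0 0 w, fun x => w.norm_le_seminorm ℝ x⟩

/-- Quadratic decay in each coordinate separately. -/
lemma schwartz_coord_decay (w : SchwartzMap Pt ℂ) :
    ∃ C : ℝ, ∀ x : Pt, (1 + x.1 ^ 2) * ‖w x‖ ≤ C ∧ (1 + x.2 ^ 2) * ‖w x‖ ≤ C := by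
  refine ⟨SchwartzMap.seminorm ℝ 0 0 w + SchwartzMap.seminorm ℝ 2 0 w, fun x => ?_⟩
  have h0 : ‖w x‖ ≤ SchwartzMap.seminorm ℝ 0 0 w := w.norm_le_seminorm ℝ x
  have h2 : ‖x‖ ^ 2 * ‖w x‖ ≤ SchwartzMap.seminorm ℝ 2 0 w := by
    have := SchwartzMap.le_seminorm ℝ 2 0 w x
    rwa [norm_iteratedFDeriv_zero] at this
  constructor
  · have hx : x.1 ^ 2 ≤ ‖x‖ ^ 2 := by
      have h1 : |x.1| ≤ ‖x‖ := by simpa [Real.norm_eq_abs] using norm_fst_le x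
      have h3 := mul_self_le_mul_self (abs_nonneg x.1) h1
      nlinarith [sq_abs x.1]
    nlinarith [norm_nonneg (w x)]
  · have hx : x.2 ^ 2 ≤ ‖x‖ ^ 2 := by
      have h1 : |x.2| ≤ ‖x‖ := by simpa [Real.norm_eq_abs] using norm_snd_le x
      have h3 := mul_self_le_mul_self (abs_nonneg x.2) h1
      nlinarith [sq_abs x.2]
    nlinarith [norm_nonneg (w x)]

/-- The plane-wave factor. -/
def pw (ξ : ℝ) (t : ℝ) : ℂ := Complex.exp (-Complex.I * (ξ : ℂ) * (t : ℂ))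

lemma pw_norm (ξ t : ℝ) : ‖pw ξ t‖ = 1 := by
  rw [pw, Complex.norm_exp]
  simp [Complex.exp_re]

lemma pw_continuous (ξ : ℝ) : Continuous (pw ξ) := by
  apply Complex.continuous_exp.comp
  continuity

lemma pw_hasDerivAt (ξ t : ℝ) :
    HasDerivAt (pw ξ) (-Complex.I * ξ * pw ξ t) t := by
  have h1 : HasDerivAt (fun s : ℝ => (s : ℂ)) 1 t := Complex.ofRealCLM.hasDerivAt
  have h2 : HasDerivAt (fun s : ℝ => -Complex.I * (ξ : ℂ) * (s : ℂ)) (-Complex.I * ξ) t := by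
    simpa using (h1.const_mul (-Complex.I * (ξ : ℂ)))
  have h3 := h2.cexp
  have h4 : (fun s : ℝ => Complex.exp (-Complex.I * (ξ : ℂ) * (s : ℂ))) = pw ξ := rfl
  rw [h4] at h3
  convert h3 using 1
  rw [pw]; ring

/-- Complex-valued polynomial-times-Gaussian. -/
def cpg (P : Polynomial ℝ) (s : ℝ) : ℂ := ((P.eval s * gaussF s : ℝ) : ℂ)

lemma cpg_continuous (P : Polynomial ℝ) : Continuous (cpg P) := by
  apply Complex.continuous_ofReal.comp
  exact P.continuous.mul (Real.continuous_exp.comp (by continuity))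

lemma cpg_bounded (P : Polynomial ℝ) : ∃ C : ℝ, ∀ s : ℝ, ‖cpg P s‖ ≤ C := by
  obtain ⟨C, hC⟩ := pg_bounded P
  refine ⟨C, fun s => ?_⟩
  rw [cpg, Complex.norm_real, Real.norm_eq_abs]
  exact hC s

lemma cpg_hasDerivAt (P : Polynomial ℝ) (s : ℝ) :
    HasDerivAt (cpg P) (cpg (P.derivative - Polynomial.X * P) s) s :=
  (pg_hasDerivAt P s).ofReal_comp

lemma cpg_integrable (P : Polynomial ℝ) : Integrable (cpg P) := by
  exact (pg_integrable P).ofReal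

/-- Integrability of (bounded)·(Schwartz) on the plane. -/
lemma intPt (w : SchwartzMap Pt ℂ) {b : Pt → ℂ} (hbc : Continuous b)
    (hbd : ∃ C, ∀ x, ‖b x‖ ≤ C) :
    Integrable (fun x : Pt => b x * w x) :=
  by obtain ⟨C, hC⟩ := hbd; exact w.integrable.bdd_mul hbc.aestronglyMeasurable (Filter.Eventually.of_forall hC)

lemma slice2_integrable (w : SchwartzMap Pt ℂ) (a : ℝ) {b : ℝ → ℂ}
    (hbc : Continuous b) (hbd : ∃ C, ∀ t, ‖b t‖ ≤ C) :
    Integrable (fun t : ℝ => b t * w (a, t)) := by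
  obtain ⟨C, hC⟩ := schwartz_coord_decay w
  obtain ⟨D, hD⟩ := hbd
  have hD0 : 0 ≤ D := (norm_nonneg _).trans (hD 0)
  refine Integrable.mono' ((integrable_inv_one_add_sq.const_mul (D * C))) ?_
    (Filter.Eventually.of_forall fun t => ?_)
  · exact (hbc.mul (w.continuous.comp (by continuity))).aestronglyMeasurable
  · have h1 : (1 + t ^ 2) * ‖w (a, t)‖ ≤ C := (hC (a, t)).2
    have h2 : (0:ℝ) < 1 + t ^ 2 := by positivity
    have h3 : ‖w (a, t)‖ ≤ C * (1 + t ^ 2)⁻¹ := by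
      rw [le_mul_inv_iff₀ h2, mul_comm]; exact h1
    calc ‖b t * w (a, t)‖ = ‖b t‖ * ‖w (a, t)‖ := norm_mul _ _
      _ ≤ D * (C * (1 + t ^ 2)⁻¹) :=
          mul_le_mul (hD t) h3 (norm_nonneg _) hD0
      _ = D * C * (1 + t ^ 2)⁻¹ := by ring

lemma slice1_integrable (w : SchwartzMap Pt ℂ) (a : ℝ) {b : ℝ → ℂ}
    (hbc : Continuous b) (hbd : ∃ C, ∀ t, ‖b t‖ ≤ C) :
    Integrable (fun t : ℝ => b t * w (t, a)) := by
  obtain ⟨C, hC⟩ := schwartz_coord_decay w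
  obtain ⟨D, hD⟩ := hbd
  have hD0 : 0 ≤ D := (norm_nonneg _).trans (hD 0)
  refine Integrable.mono' ((integrable_inv_one_add_sq.const_mul (D * C))) ?_
    (Filter.Eventually.of_forall fun t => ?_)
  · exact (hbc.mul (w.continuous.comp (by continuity))).aestronglyMeasurable
  · have h1 : (1 + t ^ 2) * ‖w (t, a)‖ ≤ C := (hC (t, a)).1
    have h2 : (0:ℝ) < 1 + t ^ 2 := by positivity
    have h3 : ‖w (t, a)‖ ≤ C * (1 + t ^ 2)⁻¹ := by
      rw [le_mul_inv_iff₀ h2, mul_comm]; exact h1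
    calc ‖b t * w (t, a)‖ = ‖b t‖ * ‖w (t, a)‖ := norm_mul _ _
      _ ≤ D * (C * (1 + t ^ 2)⁻¹) :=
          mul_le_mul (hD t) h3 (norm_nonneg _) hD0
      _ = D * C * (1 + t ^ 2)⁻¹ := by ring

lemma hasDerivAt_slice2 (w : SchwartzMap Pt ℂ) (a t : ℝ) :
    HasDerivAt (fun s => w (a, s)) (fderiv ℝ (⇑w) (a, t) (0, 1)) t := by
  have h := (w.differentiableAt (x := (a, t))).hasFDerivAt
  exact h.comp_hasDerivAt t ((hasDerivAt_const t a).prodMk (hasDerivAt_id t))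

lemma hasDerivAt_slice1 (w : SchwartzMap Pt ℂ) (a t : ℝ) :
    HasDerivAt (fun s => w (s, a)) (fderiv ℝ (⇑w) (t, a) (1, 0)) t := by
  have h := (w.differentiableAt (x := (t, a))).hasFDerivAt
  exact h.comp_hasDerivAt t ((hasDerivAt_id t).prodMk (hasDerivAt_const t a))

lemma pwcpg_bounded (ξ : ℝ) (P : Polynomial ℝ) :
    ∃ C, ∀ x : Pt, ‖pw ξ x.1 * cpg P x.2‖ ≤ C := by
  obtain ⟨C, hC⟩ := cpg_bounded P
  refine ⟨C, fun x => ?_⟩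
  rw [norm_mul, pw_norm, one_mul]
  exact hC x.2

lemma pwcpg_continuous (ξ : ℝ) (P : Polynomial ℝ) :
    Continuous (fun x : Pt => pw ξ x.1 * cpg P x.2) :=
  ((pw_continuous ξ).comp continuous_fst).mul ((cpg_continuous P).comp continuous_snd)

lemma intPt' (w : SchwartzMap Pt ℂ) (ξ : ℝ) (P : Polynomial ℝ) :
    Integrable (fun x : Pt => pw ξ x.1 * w x * cpg P x.2) := by
  have h := intPt w (pwcpg_continuous ξ P) (pwcpg_bounded ξ P)
  exact h.congr (Filter.Eventually.of_forall fun x => by ring)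

/-- Integration by parts in the second variable. -/
lemma ibp2 (w : SchwartzMap Pt ℂ) (P : Polynomial ℝ) (ξ : ℝ) :
    ∫ x : Pt, pw ξ x.1 * fderiv ℝ (⇑w) x (0, 1) * cpg P x.2
      = - ∫ x : Pt, pw ξ x.1 * w x * cpg (P.derivative - Polynomial.X * P) x.2 := by
  set w' : SchwartzMap Pt ℂ := LineDeriv.lineDerivOpCLM ℝ (SchwartzMap Pt ℂ) ((0 : ℝ), (1 : ℝ)) w with hw'
  have hw'app : ∀ x : Pt, w' x = fderiv ℝ (⇑w) x (0, 1) := fun x =>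
    SchwartzMap.lineDerivOp_apply_eq_fderiv _ w x
  set A : Pt → ℂ := fun x => pw ξ x.1 * w' x * cpg P x.2 with hA
  set B : Pt → ℂ := fun x => pw ξ x.1 * w x * cpg (P.derivative - Polynomial.X * P) x.2 with hB
  have hAint : Integrable A := intPt' w' ξ P
  have hBint : Integrable B := intPt' w ξ _
  have hsum : ∫ x : Pt, (A x + B x) = 0 := by
    have hint2 : Integrable (fun x : Pt => A x + B x) ((volume : Measure ℝ).prod volume) := by
      rw [← Measure.volume_eq_prod]; exact hAint.add hBint
    rw [show (volume : Measure Pt) = (volume : Measure ℝ).prod volume from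
      Measure.volume_eq_prod ℝ ℝ, MeasureTheory.integral_prod _ hint2]
    have inner : ∀ a : ℝ, ∫ t : ℝ, (A (a, t) + B (a, t)) = 0 := by
      intro a
      apply integral_eq_zero_of_hasDerivAt_of_integrable
        (f := fun t => pw ξ a * w (a, t) * cpg P t)
      · intro t
        have h := ((hasDerivAt_const t (pw ξ a)).mul (hasDerivAt_slice2 w a t)).mul
          (cpg_hasDerivAt P t)
        refine h.congr_deriv ?_
        simp only [hA, hB, hw'app, Pi.mul_apply]
        ring
      · have h1 : Integrable (fun t => (pw ξ a * cpg P t) * w' (a, t)) :=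
          slice2_integrable w' a
            ((continuous_const.mul (cpg_continuous P)))
            (by
              obtain ⟨C, hC⟩ := cpg_bounded P
              exact ⟨C, fun t => by
                rw [norm_mul, pw_norm, one_mul]; exact hC t⟩)
        have h2 : Integrable (fun t => (pw ξ a * cpg (P.derivative - Polynomial.X * P) t)
            * w (a, t)) :=
          slice2_integrable w a
            ((continuous_const.mul (cpg_continuous _)))
            (by
              obtain ⟨C, hC⟩ := cpg_bounded (P.derivative - Polynomial.X * P)
              exact ⟨C, fun t => by
                rw [norm_mul, pw_norm, one_mul]; exact hC t⟩)
        refine (h1.add h2).congr (Filter.Eventually.of_forall fun t => ?_)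
        simp only [Pi.add_apply, hA, hB, hw'app]
        ring
      · have h1 : Integrable (fun t => (pw ξ a * cpg P t) * w (a, t)) :=
          slice2_integrable w a
            ((continuous_const.mul (cpg_continuous P)))
            (by
              obtain ⟨C, hC⟩ := cpg_bounded P
              exact ⟨C, fun t => by
                rw [norm_mul, pw_norm, one_mul]; exact hC t⟩)
        exact h1.congr (Filter.Eventually.of_forall fun t => by ring)
    rw [show (fun a => ∫ t : ℝ, (A (a, t) + B (a, t))) = fun _ => (0 : ℂ) from
      funext inner]
    simp
  have hadd := MeasureTheory.integral_add hAint hBint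
  have hzero : (∫ x : Pt, A x) + ∫ x : Pt, B x = 0 := by rw [← hadd]; exact hsum
  have hAB : ∫ x : Pt, A x = - ∫ x : Pt, B x := by linear_combination hzero
  calc ∫ x : Pt, pw ξ x.1 * fderiv ℝ (⇑w) x (0, 1) * cpg P x.2
      = ∫ x : Pt, A x := by
        apply integral_congr_ae
        exact Filter.Eventually.of_forall fun x => by rw [hA]; simp [hw'app]
    _ = - ∫ x : Pt, B x := hAB

/-- Integration by parts in the first variable (Fourier identity). -/
lemma ibp1 (w : SchwartzMap Pt ℂ) (P : Polynomial ℝ) (ξ : ℝ) :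
    ∫ x : Pt, pw ξ x.1 * fderiv ℝ (⇑w) x (1, 0) * cpg P x.2
      = (Complex.I * ξ) * ∫ x : Pt, pw ξ x.1 * w x * cpg P x.2 := by
  set w' : SchwartzMap Pt ℂ := LineDeriv.lineDerivOpCLM ℝ (SchwartzMap Pt ℂ) ((1 : ℝ), (0 : ℝ)) w with hw'
  have hw'app : ∀ x : Pt, w' x = fderiv ℝ (⇑w) x (1, 0) := fun x =>
    SchwartzMap.lineDerivOp_apply_eq_fderiv _ w x
  set A : Pt → ℂ := fun x => pw ξ x.1 * w' x * cpg P x.2 with hA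
  set B : Pt → ℂ := fun x => (-(Complex.I * ξ)) * (pw ξ x.1 * w x * cpg P x.2) with hB
  have hAint : Integrable A := intPt' w' ξ P
  have hBint : Integrable B := (intPt' w ξ P).const_mul _
  have hsum : ∫ x : Pt, (A x + B x) = 0 := by
    have hint2 : Integrable (fun x : Pt => A x + B x) ((volume : Measure ℝ).prod volume) := by
      rw [← Measure.volume_eq_prod]; exact hAint.add hBint
    rw [show (volume : Measure Pt) = (volume : Measure ℝ).prod volume from
      Measure.volume_eq_prod ℝ ℝ, MeasureTheory.integral_prod_symm _ hint2]
    have inner : ∀ a : ℝ, ∫ t : ℝ, (A (t, a) + B (t, a)) = 0 := by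
      intro a
      apply integral_eq_zero_of_hasDerivAt_of_integrable
        (f := fun t => pw ξ t * w (t, a) * cpg P a)
      · intro t
        have h := ((pw_hasDerivAt ξ t).mul (hasDerivAt_slice1 w a t)).mul
          (hasDerivAt_const t (cpg P a))
        refine h.congr_deriv ?_
        simp only [hA, hB, hw'app]
        ring
      · have h1 : Integrable (fun t => (pw ξ t * cpg P a) * w' (t, a)) :=
          slice1_integrable w' a
            ((pw_continuous ξ).mul continuous_const)
            (⟨‖cpg P a‖, fun t => by rw [norm_mul, pw_norm, one_mul]⟩)
        have h2 : Integrable (fun t => ((-(Complex.I * ξ) * pw ξ t) * cpg P a) * w (t, a)) :=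
          slice1_integrable w a
            ((continuous_const.mul (pw_continuous ξ)).mul continuous_const)
            (⟨‖Complex.I * ξ‖ * ‖cpg P a‖, fun t => by
              rw [norm_mul, norm_mul, norm_neg, norm_mul, pw_norm, mul_one]⟩)
        refine (h1.add h2).congr (Filter.Eventually.of_forall fun t => ?_)
        simp only [Pi.add_apply, hA, hB, hw'app]
        ring
      · have h1 : Integrable (fun t => (pw ξ t * cpg P a) * w (t, a)) :=
          slice1_integrable w a
            ((pw_continuous ξ).mul continuous_const)
            (⟨‖cpg P a‖, fun t => by rw [norm_mul, pw_norm, one_mul]⟩)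
        exact h1.congr (Filter.Eventually.of_forall fun t => by ring)
    rw [show (fun a => ∫ t : ℝ, (A (t, a) + B (t, a))) = fun _ => (0 : ℂ) from
      funext inner]
    simp
  have hadd := MeasureTheory.integral_add hAint hBint
  have hzero : (∫ x : Pt, A x) + ∫ x : Pt, B x = 0 := by rw [← hadd]; exact hsum
  have hBval : ∫ x : Pt, B x
      = (-(Complex.I * ξ)) * ∫ x : Pt, pw ξ x.1 * w x * cpg P x.2 := by
    rw [hB]; exact integral_const_mul _ _
  calc ∫ x : Pt, pw ξ x.1 * fderiv ℝ (⇑w) x (1, 0) * cpg P x.2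
      = ∫ x : Pt, A x := by
        apply integral_congr_ae
        exact Filter.Eventually.of_forall fun x => by rw [hA]; simp [hw'app]
    _ = (Complex.I * ξ) * ∫ x : Pt, pw ξ x.1 * w x * cpg P x.2 := by
        have : ∫ x : Pt, A x = - ∫ x : Pt, B x := by linear_combination hzero
        rw [this, hBval]; ring

/-! ## Part 3: assembly -/

def hermP (n : ℕ) : Polynomial ℝ := (hermC n)⁻¹ • HQ n

lemma cpg_hermF (m : ℕ) (s : ℝ) : ((hermF m s : ℝ) : ℂ) = cpg (hermP m) s := by
  rw [hermF_eq, cpg, hermP]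

lemma cpg_add (P Q : Polynomial ℝ) (s : ℝ) : cpg (P + Q) s = cpg P s + cpg Q s := by
  simp [cpg]; push_cast; ring

lemma cpg_X_mul (P : Polynomial ℝ) (s : ℝ) :
    cpg (Polynomial.X * P) s = (s : ℂ) * cpg P s := by
  simp [cpg]; push_cast; ring

lemma cpg_smul (c : ℝ) (P : Polynomial ℝ) (s : ℝ) :
    cpg (c • P) s = (c : ℂ) * cpg P s := by
  simp [cpg]; push_cast; ring

lemma hermC_scalar (n : ℕ) :
    (hermC (n + 1))⁻¹ * (2 * (n : ℝ) + 2) = Real.sqrt (2 * n + 2) * (hermC n)⁻¹ := by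
  rw [hermC_succ]
  have h1 := (hermC_pos n).ne'
  have h2 := (sqrt2n2_pos n).ne'
  have key : Real.sqrt (2 * n + 2) ^ 2 = 2 * n + 2 := Real.sq_sqrt (by positivity)
  field_simp
  have key' : Real.sqrt (2 * ((n:ℝ) + 1)) ^ 2 = 2 * ((n:ℝ) + 1) := Real.sq_sqrt (by positivity)
  linear_combination (-1 : ℝ) * key'

/-- Polynomial-level annihilation recurrence. -/
lemma hermP_deriv (n : ℕ) :
    (hermP (n + 1)).derivative = Real.sqrt (2 * n + 2) • hermP n := by
  rw [hermP, Polynomial.derivative_smul, HQ_deriv, hermP,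
    ← Nat.cast_smul_eq_nsmul ℝ (2 * (n + 1)) (HQ n), smul_smul, smul_smul]
  congr 1
  push_cast
  linarith [hermC_scalar n]

/-- Polynomial-level creation recurrence. -/
lemma hermP_crea (n : ℕ) :
    2 • (Polynomial.X * hermP n) - (hermP n).derivative
      = Real.sqrt (2 * n + 2) • hermP (n + 1) := by
  rw [hermP, hermP, Polynomial.derivative_smul, mul_smul_comm, smul_comm (2:ℕ),
    ← smul_sub, show 2 • (Polynomial.X * HQ n) - (HQ n).derivative = HQ (n + 1) from rfl,
    smul_smul]
  congr 1
  rw [hermC_succ]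
  have h1 := (hermC_pos n).ne'
  have h2 := (sqrt2n2_pos n).ne'
  field_simp

lemma intPt_fd2 (w : SchwartzMap Pt ℂ) (ξ : ℝ) (P : Polynomial ℝ) :
    Integrable (fun x : Pt => pw ξ x.1 * fderiv ℝ (⇑w) x (0, 1) * cpg P x.2) := by
  refine (intPt' (LineDeriv.lineDerivOpCLM ℝ (SchwartzMap Pt ℂ) ((0:ℝ),(1:ℝ)) w) ξ P).congr
    (Filter.Eventually.of_forall fun x => ?_)
  simp only [LineDeriv.lineDerivOpCLM_apply, SchwartzMap.lineDerivOp_apply_eq_fderiv]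

lemma intPt_fd1 (w : SchwartzMap Pt ℂ) (ξ : ℝ) (P : Polynomial ℝ) :
    Integrable (fun x : Pt => pw ξ x.1 * fderiv ℝ (⇑w) x (1, 0) * cpg P x.2) := by
  refine (intPt' (LineDeriv.lineDerivOpCLM ℝ (SchwartzMap Pt ℂ) ((1:ℝ),(0:ℝ)) w) ξ P).congr
    (Filter.Eventually.of_forall fun x => ?_)
  simp only [LineDeriv.lineDerivOpCLM_apply, SchwartzMap.lineDerivOp_apply_eq_fderiv]

lemma intPt_X (w : SchwartzMap Pt ℂ) (ξ : ℝ) (P : Polynomial ℝ) :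
    Integrable (fun x : Pt => pw ξ x.1 * ((x.2 : ℂ) * w x) * cpg P x.2) := by
  refine (intPt' w ξ (Polynomial.X * P)).congr
    (Filter.Eventually.of_forall fun x => ?_)
  show pw ξ x.1 * w x * cpg (Polynomial.X * P) x.2
      = pw ξ x.1 * ((x.2 : ℂ) * w x) * cpg P x.2
  rw [cpg_X_mul]; ring

lemma key1 (w : SchwartzMap Pt ℂ) (n : ℕ) (ξ : ℝ) :
    ∫ x : Pt, pw ξ x.1 * ((x.2 : ℂ) * w x - fderiv ℝ (⇑w) x (0, 1)) * cpg (hermP (n + 1)) x.2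
      = ((Real.sqrt (2 * n + 2) : ℝ) : ℂ) * ∫ x : Pt, pw ξ x.1 * w x * cpg (hermP n) x.2 := by
  set P := hermP (n + 1) with hP
  have hsplit : ∫ x : Pt, pw ξ x.1 * ((x.2 : ℂ) * w x - fderiv ℝ (⇑w) x (0, 1)) * cpg P x.2
      = (∫ x : Pt, pw ξ x.1 * ((x.2 : ℂ) * w x) * cpg P x.2)
        - ∫ x : Pt, pw ξ x.1 * fderiv ℝ (⇑w) x (0, 1) * cpg P x.2 := by
    rw [← integral_sub (intPt_X w ξ P) (intPt_fd2 w ξ P)]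
    apply integral_congr_ae (Filter.Eventually.of_forall fun x => ?_)
    ring
  rw [hsplit, ibp2 w P ξ]
  have h1 : ∫ x : Pt, pw ξ x.1 * ((x.2 : ℂ) * w x) * cpg P x.2
      = ∫ x : Pt, pw ξ x.1 * w x * cpg (Polynomial.X * P) x.2 := by
    apply integral_congr_ae (Filter.Eventually.of_forall fun x => ?_)
    rw [cpg_X_mul]; ring
  rw [h1, sub_neg_eq_add, ← integral_add (intPt' w ξ _) (intPt' w ξ _)]
  have h2 : ∀ x : Pt, pw ξ x.1 * w x * cpg (Polynomial.X * P) x.2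
      + pw ξ x.1 * w x * cpg (P.derivative - Polynomial.X * P) x.2
      = ((Real.sqrt (2 * n + 2) : ℝ) : ℂ) * (pw ξ x.1 * w x * cpg (hermP n) x.2) := by
    intro x
    rw [← mul_add, ← cpg_add,
      show Polynomial.X * P + (P.derivative - Polynomial.X * P) = P.derivative by ring,
      hP, hermP_deriv n, cpg_smul]
    ring
  rw [show (fun x : Pt => pw ξ x.1 * w x * cpg (Polynomial.X * P) x.2
      + pw ξ x.1 * w x * cpg (P.derivative - Polynomial.X * P) x.2)
      = fun x : Pt => ((Real.sqrt (2 * n + 2) : ℝ) : ℂ)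
        * (pw ξ x.1 * w x * cpg (hermP n) x.2) from funext h2]
  exact integral_const_mul _ _

lemma key2 (w : SchwartzMap Pt ℂ) (n : ℕ) (ξ : ℝ) :
    ∫ x : Pt, pw ξ x.1 * ((x.2 : ℂ) * w x + fderiv ℝ (⇑w) x (0, 1)) * cpg (hermP n) x.2
      = ((Real.sqrt (2 * n + 2) : ℝ) : ℂ)
          * ∫ x : Pt, pw ξ x.1 * w x * cpg (hermP (n + 1)) x.2 := by
  set P := hermP n with hP
  have hsplit : ∫ x : Pt, pw ξ x.1 * ((x.2 : ℂ) * w x + fderiv ℝ (⇑w) x (0, 1)) * cpg P x.2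
      = (∫ x : Pt, pw ξ x.1 * ((x.2 : ℂ) * w x) * cpg P x.2)
        + ∫ x : Pt, pw ξ x.1 * fderiv ℝ (⇑w) x (0, 1) * cpg P x.2 := by
    rw [← integral_add (intPt_X w ξ P) (intPt_fd2 w ξ P)]
    apply integral_congr_ae (Filter.Eventually.of_forall fun x => ?_)
    ring
  rw [hsplit, ibp2 w P ξ]
  have h1 : ∫ x : Pt, pw ξ x.1 * ((x.2 : ℂ) * w x) * cpg P x.2
      = ∫ x : Pt, pw ξ x.1 * w x * cpg (Polynomial.X * P) x.2 := by
    apply integral_congr_ae (Filter.Eventually.of_forall fun x => ?_)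
    rw [cpg_X_mul]; ring
  have h3 : (∫ x : Pt, pw ξ x.1 * w x * cpg (Polynomial.X * P) x.2)
      - (∫ x : Pt, pw ξ x.1 * w x * cpg (P.derivative - Polynomial.X * P) x.2)
      = ∫ x : Pt, (pw ξ x.1 * w x * cpg (Polynomial.X * P) x.2
          - pw ξ x.1 * w x * cpg (P.derivative - Polynomial.X * P) x.2) :=
    (integral_sub (intPt' w ξ _) (intPt' w ξ _)).symm
  rw [h1, ← sub_eq_add_neg, h3]
  have h2 : ∀ x : Pt, pw ξ x.1 * w x * cpg (Polynomial.X * P) x.2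
      - (pw ξ x.1 * w x * cpg (P.derivative - Polynomial.X * P) x.2)
      = ((Real.sqrt (2 * n + 2) : ℝ) : ℂ) * (pw ξ x.1 * w x * cpg (hermP (n + 1)) x.2) := by
    intro x
    have hpoly : Polynomial.X * P - (P.derivative - Polynomial.X * P)
        = 2 • (Polynomial.X * P) - P.derivative := by
      rw [two_smul]; ring
    rw [show pw ξ x.1 * w x * cpg (Polynomial.X * P) x.2
        - (pw ξ x.1 * w x * cpg (P.derivative - Polynomial.X * P) x.2)
        = pw ξ x.1 * w x * (cpg (Polynomial.X * P) x.2
            - cpg (P.derivative - Polynomial.X * P) x.2) by ring]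
    have hsub : cpg (Polynomial.X * P) x.2 - cpg (P.derivative - Polynomial.X * P) x.2
        = cpg (2 • (Polynomial.X * P) - P.derivative) x.2 := by
      rw [← hpoly, show Polynomial.X * P - (P.derivative - Polynomial.X * P)
        = Polynomial.X * P + -(P.derivative - Polynomial.X * P) by ring, cpg_add]
      simp only [cpg, Polynomial.eval_neg, Polynomial.eval_sub, Polynomial.eval_mul,
        Polynomial.eval_X]
      push_cast
      ring
    rw [hsub, hP, hermP_crea n, cpg_smul]
    ring
  rw [show (fun x : Pt => pw ξ x.1 * w x * cpg (Polynomial.X * P) x.2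
      - pw ξ x.1 * w x * cpg (P.derivative - Polynomial.X * P) x.2)
      = fun x : Pt => ((Real.sqrt (2 * n + 2) : ℝ) : ℂ)
        * (pw ξ x.1 * w x * cpg (hermP (n + 1)) x.2) from funext h2]
  exact integral_const_mul _ _

lemma key3 (w : SchwartzMap Pt ℂ) (P : Polynomial ℝ) (ξ : ℝ) :
    ∫ x : Pt, pw ξ x.1 * (2 * (-Complex.I * fderiv ℝ (⇑w) x (1, 0))) * cpg P x.2
      = 2 * (ξ : ℂ) * ∫ x : Pt, pw ξ x.1 * w x * cpg P x.2 := by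
  have h1 : ∫ x : Pt, pw ξ x.1 * (2 * (-Complex.I * fderiv ℝ (⇑w) x (1, 0))) * cpg P x.2
      = (2 * -Complex.I) * ∫ x : Pt, pw ξ x.1 * fderiv ℝ (⇑w) x (1, 0) * cpg P x.2 := by
    rw [← integral_const_mul]
    apply integral_congr_ae (Filter.Eventually.of_forall fun x => ?_)
    ring
  rw [h1, ibp1 w P ξ, ← mul_assoc]
  congr 1
  have hI : Complex.I * Complex.I = -1 := Complex.I_mul_I
  linear_combination (-2 * (ξ : ℂ)) * hI

/-- equation (3.31) of the paper: `S` conjugates `L̃_{0,1}` to the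
multiplication operator `[[0, √(2n+2)],[√(2n+2), 2ξ]]`. -/
theorem statement12 (u : SchwartzMap Pt V2) (n : ℕ) (ξ : ℝ) :
    Sop (fun z => Ltil (⇑u) z) ξ n =
      (((Real.sqrt (2 * n + 2) : ℝ) : ℂ) * (Sop (⇑u) ξ n).2,
       ((Real.sqrt (2 * n + 2) : ℝ) : ℂ) * (Sop (⇑u) ξ n).1
         + 2 * (ξ : ℂ) * (Sop (⇑u) ξ n).2) := by
  set w1 : SchwartzMap Pt ℂ := projSchwartz (ContinuousLinearMap.fst ℝ ℂ ℂ) u with hw1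
  set w2 : SchwartzMap Pt ℂ := projSchwartz (ContinuousLinearMap.snd ℝ ℂ ℂ) u with hw2
  have hSa : (Sop (⇑u) ξ n).1 = ∫ x : Pt, pw ξ x.1 * w1 x * cpg (hermP (n + 1)) x.2 := by
    apply integral_congr_ae (Filter.Eventually.of_forall fun x => ?_)
    rw [← cpg_hermF]
    rfl
  have hSb : (Sop (⇑u) ξ n).2 = ∫ x : Pt, pw ξ x.1 * w2 x * cpg (hermP n) x.2 := by
    apply integral_congr_ae (Filter.Eventually.of_forall fun x => ?_)
    rw [← cpg_hermF]
    rfl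
  refine Prod.ext ?_ ?_
  · have lhs1 : (Sop (fun z => Ltil (⇑u) z) ξ n).1
        = ∫ x : Pt, pw ξ x.1 * ((x.2 : ℂ) * w2 x - fderiv ℝ (⇑w2) x (0, 1))
            * cpg (hermP (n + 1)) x.2 := by
      apply integral_congr_ae (Filter.Eventually.of_forall fun x => ?_)
      rw [← cpg_hermF]
      rfl
    rw [lhs1, key1 w2 n ξ, ← hSb]
  · set P := hermP n with hP
    have hfirst : Integrable
        (fun x : Pt => pw ξ x.1 * ((x.2 : ℂ) * w1 x + fderiv ℝ (⇑w1) x (0, 1)) * cpg P x.2) :=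
      ((intPt_X w1 ξ P).add (intPt_fd2 w1 ξ P)).congr
        (Filter.Eventually.of_forall fun x => by simp only [Pi.add_apply]; ring)
    have hsecond : Integrable
        (fun x : Pt => pw ξ x.1 * (2 * (-Complex.I * fderiv ℝ (⇑w2) x (1, 0))) * cpg P x.2) :=
      ((intPt_fd1 w2 ξ P).const_mul (2 * -Complex.I)).congr
        (Filter.Eventually.of_forall fun x => by ring)
    have lhs2 : (Sop (fun z => Ltil (⇑u) z) ξ n).2
        = ∫ x : Pt, (pw ξ x.1 * ((x.2 : ℂ) * w1 x + fderiv ℝ (⇑w1) x (0, 1)) * cpg P x.2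
            + pw ξ x.1 * (2 * (-Complex.I * fderiv ℝ (⇑w2) x (1, 0))) * cpg P x.2) := by
      apply integral_congr_ae (Filter.Eventually.of_forall fun x => ?_)
      rw [hP, ← cpg_hermF]
      show Complex.exp (-Complex.I * ξ * x.1)
          * (annOp (fun z => (u z).1) x + 2 * DX1 (fun z => (u z).2) x)
          * ((hermF n x.2 : ℝ) : ℂ) = _
      rw [annOp, DX1]
      show pw ξ x.1 * (((x.2 : ℂ) * w1 x + fderiv ℝ (⇑w1) x (0, 1))
          + 2 * (-Complex.I * fderiv ℝ (⇑w2) x (1, 0))) * ((hermF n x.2 : ℝ) : ℂ) = _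
      ring
    rw [lhs2, integral_add hfirst hsecond, key2 w1 n ξ, key3 w2 P ξ, ← hSa, hP, ← hSb]
end
end
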